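/- Let H be a closed subalgebra of L_log containing the constants. If f ∈ H with f ∈ L¹ (i.e. f ∈ H₁), then e^f ∈ H. -/

import Mathlib

open MeasureTheory ENNReal Filter

variable {α : Type*} [MeasurableSpace α]

/-- Membership in the Orlicz algebra `L_log`. -/
def LlogMem (μ : Measure α) (f : α → ℂ) : Prop :=
  AEMeasurable f μ ∧
    ∫⁻ x, ENNReal.ofReal (Real.log (1 + ‖f x‖)) ∂μ ≠ ⊤

/-- `H` is a closed subalgebra (containing the constants) of the topological
algebra `L_log`, where closedness is with respect to the `F`-norm
`f ↦ ∫ log(1+|f|) dμ`. -/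
structure IsClosedSubalgebraLlog (μ : Measure α) (H : Set (α → ℂ)) : Prop where
  subset_Llog : ∀ f ∈ H, LlogMem μ f
  const_mem : ∀ c : ℂ, (fun _ => c) ∈ H
  add_mem : ∀ f ∈ H, ∀ g ∈ H, f + g ∈ H
  mul_mem : ∀ f ∈ H, ∀ g ∈ H, f * g ∈ H
  smul_mem : ∀ (c : ℂ), ∀ f ∈ H, c • f ∈ H
  closed : ∀ (F : ℕ → α → ℂ) (f : α → ℂ), (∀ n, F n ∈ H) → LlogMem μ f →
    Tendsto (fun n => ∫ x, Real.log (1 + ‖F n x - f x‖) ∂μ)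
      atTop (nhds 0) → f ∈ H

/-!
The partial sums `∑_{n<N} fⁿ/n!` lie in `H` and converge to `e^f` pointwise. They are dominated
by `e^{|f|}`, and `log (1 + e^{|f|}) ≤ log 2 + |f|` is integrable because `f ∈ L¹`, so dominated
convergence gives convergence in the `F`-norm of `L_log`, and `e^f ∈ H` by closedness.
-/

open scoped Nat Topology

lemma Real.log_one_add_exp_le {t : ℝ} (ht : 0 ≤ t) :
    Real.log (1 + Real.exp t) ≤ Real.log 2 + t := by
  rw [← Real.log_exp t, ← Real.log_mul two_ne_zero (Real.exp_pos _).ne', Real.log_exp]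
  exact Real.log_le_log (by positivity) (by linarith [Real.one_le_exp ht])

lemma MeasureTheory.Integrable.log_one_add_exp_norm {E : Type*} [NormedAddCommGroup E]
    {μ : Measure α} [IsFiniteMeasure μ] {f : α → E} (hf : Integrable f μ) :
    Integrable (fun x => Real.log (1 + Real.exp ‖f x‖)) μ := by
  have hcont : Continuous fun t : ℝ => Real.log (1 + Real.exp t) :=
    (continuous_const.add Real.continuous_exp).log
      fun t => (by positivity : (0 : ℝ) < 1 + Real.exp t).ne'
  refine ((integrable_const (Real.log 2)).add hf.norm).mono'
    (hcont.comp_aestronglyMeasurable hf.1.norm) (ae_of_all _ fun x => ?_)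
  rw [Real.norm_of_nonneg (Real.log_nonneg (by linarith [Real.exp_pos ‖f x‖]))]
  exact Real.log_one_add_exp_le (norm_nonneg _)

lemma Complex.log_one_add_norm_sub_le {z w : ℂ} {b : ℝ} (hz : ‖z‖ ≤ b) (hw : ‖w‖ ≤ b) :
    Real.log (1 + ‖z - w‖) ≤ Real.log 2 + Real.log (1 + b) := by
  have hb : 0 ≤ b := (norm_nonneg z).trans hz
  rw [← Real.log_mul two_ne_zero (by positivity)]
  exact Real.log_le_log (by positivity) (by linarith [norm_sub_le z w])

lemma Complex.norm_sum_range_smul_pow_le_exp (z : ℂ) (N : ℕ) :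
    ‖∑ n ∈ Finset.range N, (n ! : ℂ)⁻¹ • z ^ n‖ ≤ Real.exp ‖z‖ :=
  calc ‖∑ n ∈ Finset.range N, (n ! : ℂ)⁻¹ • z ^ n‖
      ≤ ∑ n ∈ Finset.range N, ‖(n ! : ℂ)⁻¹ • z ^ n‖ := norm_sum_le _ _
    _ = ∑ n ∈ Finset.range N, ‖z‖ ^ n / n ! := by
        refine Finset.sum_congr rfl fun n _ => ?_
        simp [div_eq_inv_mul]
    _ ≤ Real.exp ‖z‖ := Real.sum_le_exp_of_nonneg (norm_nonneg z) N

lemma Complex.tendsto_sum_range_smul_pow_exp (z : ℂ) :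
    Tendsto (fun N => ∑ n ∈ Finset.range N, (n ! : ℂ)⁻¹ • z ^ n) atTop (𝓝 (Complex.exp z)) := by
  rw [Complex.exp_eq_exp_ℂ]
  exact (NormedSpace.exp_series_hasSum_exp' z).tendsto_sum_nat

lemma Complex.continuous_log_one_add_norm : Continuous fun z : ℂ => Real.log (1 + ‖z‖) :=
  (continuous_const.add continuous_norm).log fun z => (by positivity : (0 : ℝ) < 1 + ‖z‖).ne'

lemma llogMem_of_integrable {μ : Measure α} {f : α → ℂ} (hf : AEMeasurable f μ)
    (hlog : Integrable (fun x => Real.log (1 + ‖f x‖)) μ) : LlogMem μ f :=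
  ⟨hf, hlog.lintegral_lt_top.ne⟩

namespace IsClosedSubalgebraLlog

variable {μ : Measure α} {H : Set (α → ℂ)}

theorem pow_mem (hH : IsClosedSubalgebraLlog μ H) {f : α → ℂ} (hf : f ∈ H) (n : ℕ) :
    f ^ n ∈ H := by
  induction n with
  | zero => exact hH.const_mem 1
  | succ n ih => rw [pow_succ]; exact hH.mul_mem _ ih _ hf

theorem sum_mem (hH : IsClosedSubalgebraLlog μ H) {ι : Type*} (s : Finset ι) {F : ι → α → ℂ}
    (hF : ∀ i ∈ s, F i ∈ H) :
    ∑ i ∈ s, F i ∈ H :=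
  Finset.sum_induction F (· ∈ H) (fun _ _ ha hb => hH.add_mem _ ha _ hb) (hH.const_mem 0) hF

theorem mem_of_tendsto_of_norm_le [IsFiniteMeasure μ] (hH : IsClosedSubalgebraLlog μ H)
    {F : ℕ → α → ℂ} {g : α → ℂ} {b : α → ℝ}
    (hF : ∀ n, F n ∈ H) (hg : AEMeasurable g μ)
    (hb : Integrable (fun x => Real.log (1 + b x)) μ)
    (hFb : ∀ n, ∀ᵐ x ∂μ, ‖F n x‖ ≤ b x) (hgb : ∀ᵐ x ∂μ, ‖g x‖ ≤ b x)
    (hlim : ∀ᵐ x ∂μ, Tendsto (fun n => F n x) atTop (𝓝 (g x))) : g ∈ H := by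
  have hlog := Complex.continuous_log_one_add_norm
  have hlog_nonneg (z : ℂ) : 0 ≤ Real.log (1 + ‖z‖) :=
    Real.log_nonneg (le_add_of_nonneg_right (norm_nonneg z))
  have hg_mem : LlogMem μ g := by
    refine llogMem_of_integrable hg
      (hb.mono' (hlog.measurable.comp_aemeasurable hg).aestronglyMeasurable ?_)
    filter_upwards [hgb] with x hx
    rw [Real.norm_of_nonneg (hlog_nonneg _)]
    exact Real.log_le_log (by positivity) (by linarith)
  refine hH.closed F g hF hg_mem ?_
  have hmeas (n : ℕ) : AEStronglyMeasurable (fun x => Real.log (1 + ‖F n x - g x‖)) μ :=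
    (hlog.measurable.comp_aemeasurable
      ((hH.subset_Llog _ (hF n)).1.sub hg)).aestronglyMeasurable
  have hbound (n : ℕ) :
      ∀ᵐ x ∂μ, ‖Real.log (1 + ‖F n x - g x‖)‖ ≤ Real.log 2 + Real.log (1 + b x) := by
    filter_upwards [hFb n, hgb] with x hFx hgx
    rw [Real.norm_of_nonneg (hlog_nonneg _)]
    exact Complex.log_one_add_norm_sub_le hFx hgx
  have hlim' : ∀ᵐ x ∂μ, Tendsto (fun n => Real.log (1 + ‖F n x - g x‖)) atTop (𝓝 0) := by
    filter_upwards [hlim] with x hx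
    simpa [Function.comp_def] using (hlog.tendsto 0).comp (tendsto_sub_nhds_zero_iff.2 hx)
  simpa using tendsto_integral_of_dominated_convergence _ hmeas
    ((integrable_const _).add hb) hbound hlim'

end IsClosedSubalgebraLlog

/-- If `H` is a closed subalgebra of `L_log` containing the constants and
`f ∈ H ∩ L¹`, then `e^f ∈ H`. -/
theorem stmt10 (μ : Measure α) [IsProbabilityMeasure μ]
    (H : Set (α → ℂ)) (hH : IsClosedSubalgebraLlog μ H)
    (f : α → ℂ) (hf : f ∈ H) (hf1 : Integrable f μ) :
    (fun x => Complex.exp (f x)) ∈ H := by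
  have hfm : AEMeasurable f μ := (hH.subset_Llog f hf).1
  have hF (N : ℕ) : ∑ n ∈ Finset.range N, (n ! : ℂ)⁻¹ • f ^ n ∈ H :=
    hH.sum_mem _ fun n _ => hH.smul_mem _ _ (hH.pow_mem hf n)
  refine hH.mem_of_tendsto_of_norm_le hF (Complex.measurable_exp.comp_aemeasurable hfm)
    hf1.log_one_add_exp_norm
    (fun N => ae_of_all _ fun x => ?_) (ae_of_all _ fun x => Complex.norm_exp_le_exp_norm _)
    (ae_of_all _ fun x => ?_)
  · simpa [Finset.sum_apply] using Complex.norm_sum_range_smul_pow_le_exp (f x) N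
  · simpa [Finset.sum_apply] using Complex.tendsto_sum_range_smul_pow_exp (f x)
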